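/- arXiv:2104.02455 — 5 statements merged into one kernel-verified Lean document; each statement's English description precedes it below -/
import Mathlib

section
/- The lowest generalized Dellac configuration C_0(l,m,n) has exactly n·C(m,2)·C(l,2) inversions, where C(a,2) = a(a-1)/2. -/
/-- Ceiling division `⌈j/l⌉`. -/
def ceilDiv' (j l : ℕ) : ℕ := (j + l - 1) / l

/-- A generalized Dellac configuration of size `n` with type `(l,m)`: a set of dots
`(i,j)` (`i` = row from bottom, `j` = column, both 1-based) in an `mn × ln` grid with
`l` dots per row, `m` dots per column, and `⌈j/l⌉ ≤ i ≤ ⌈j/l⌉ + (m-1)n` for each dot. -/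
def IsGenDellac (l m n : ℕ) (C : Finset (ℕ × ℕ)) : Prop :=
  (∀ d ∈ C, 1 ≤ d.1 ∧ d.1 ≤ m * n ∧ 1 ≤ d.2 ∧ d.2 ≤ l * n ∧
      ceilDiv' d.2 l ≤ d.1 ∧ d.1 ≤ ceilDiv' d.2 l + (m - 1) * n) ∧
  (∀ i ∈ Finset.Icc 1 (m * n), (C.filter (fun d => d.1 = i)).card = l) ∧
  (∀ j ∈ Finset.Icc 1 (l * n), (C.filter (fun d => d.2 = j)).card = m)

/-- Number of inversions of a configuration: pairs of dots `(d₁,d₂)` with `d₁` in a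
strictly lower row and strictly greater column than `d₂`. -/
def invDC (C : Finset (ℕ × ℕ)) : ℕ :=
  ((C ×ˢ C).filter (fun p => p.1.1 < p.2.1 ∧ p.2.2 < p.1.2)).card

/-- The lowest configuration `C₀(l,m,n)`: column `j = pl+q` has dots in rows `pm+1,...,(p+1)m`. -/
def lowestC (l m n : ℕ) : Finset (ℕ × ℕ) :=
  (Finset.Icc 1 (m * n) ×ˢ Finset.Icc 1 (l * n)).filter
    (fun d => (d.2 - 1) / l * m + 1 ≤ d.1 ∧ d.1 ≤ ((d.2 - 1) / l + 1) * m)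

/-!
`C₀(l,m,n)` is the union of `n` full `m × l` rectangles of dots placed along the diagonal,
the `p`-th one occupying rows `pm+1, …, (p+1)m` and columns `pl+1, …, (p+1)l`. A dot of an
earlier rectangle lies strictly below and strictly to the left of every dot of a later one,
so all inversions live inside a single rectangle; there, an inversion is a choice of two
rows and two columns, giving `C(m,2)·C(l,2)` inversions per rectangle.
-/

open Finset

theorem invDC_product (s t : Finset ℕ) :
    invDC (s ×ˢ t) = (#s).choose 2 * (#t).choose 2 := by
  rw [← card_product_filter_lt, ← card_product_filter_lt, ← card_product, invDC]
  refine card_nbij' (fun p => ((p.1.1, p.2.1), (p.2.2, p.1.2)))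
    (fun q => ((q.1.1, q.2.2), (q.1.2, q.2.1))) ?_ ?_ ?_ ?_ <;>
    · intro _
      simp +contextual [mem_product]

theorem invDC_biUnion_of_lt {ι : Type*} [LinearOrder ι] (I : Finset ι)
    (B : ι → Finset (ℕ × ℕ))
    (hB : ∀ p q, p < q → ∀ x ∈ B p, ∀ y ∈ B q, x.1 < y.1 ∧ x.2 < y.2) :
    invDC (I.biUnion B) = ∑ p ∈ I, invDC (B p) := by
  have hsame : ∀ p q, ∀ x ∈ B p, ∀ y ∈ B q, x.1 < y.1 → y.2 < x.2 → p = q := by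
    intro p q x hx y hy h1 h2
    rcases lt_trichotomy p q with hpq | rfl | hqp
    · exact absurd (hB p q hpq x hx y hy).2 h2.not_gt
    · rfl
    · exact absurd (hB q p hqp y hy x hx).1 h1.not_gt
  unfold invDC
  rw [← card_biUnion]
  · congr 1
    ext ⟨x, y⟩
    simp only [mem_filter, mem_product, mem_biUnion]
    constructor
    · rintro ⟨⟨⟨p, hp, hx⟩, ⟨q, hq, hy⟩⟩, h1, h2⟩
      obtain rfl := hsame p q x hx y hy h1 h2
      exact ⟨p, hp, ⟨hx, hy⟩, h1, h2⟩
    · rintro ⟨p, hp, ⟨hx, hy⟩, h⟩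
      exact ⟨⟨⟨p, hp, hx⟩, ⟨p, hp, hy⟩⟩, h⟩
  · intro p _ q _ hpq
    refine disjoint_left.2 fun z hzp hzq => hpq ?_
    simp only [mem_filter, mem_product] at hzp hzq
    exact hsame p q z.1 hzp.1.1 z.2 hzq.1.2 hzp.2.1 hzp.2.2

theorem lowestC_eq_biUnion (l m n : ℕ) :
    lowestC l m n =
      (range n).biUnion fun p => Ioc (p * m) ((p + 1) * m) ×ˢ Ioc (p * l) ((p + 1) * l) := by
  ext ⟨i, j⟩
  simp only [lowestC, mem_filter, mem_product, mem_Icc, mem_biUnion, mem_range, mem_Ioc,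
    add_one_mul]
  rcases Nat.eq_zero_or_pos l with rfl | hl
  · simp only [zero_mul, mul_zero, zero_add]
    constructor
    · rintro ⟨⟨-, hj1, hj0⟩, -⟩
      omega
    · rintro ⟨-, -, -, hj1, hj0⟩
      omega
  constructor
  · rintro ⟨⟨⟨hi1, -⟩, hj1, hjn⟩, hi2, hi3⟩
    have hp := (Nat.div_eq_iff (x := j - 1) hl).1 rfl
    refine ⟨(j - 1) / l, ?_, ⟨by omega, by omega⟩, by omega, by omega⟩
    rw [Nat.div_lt_iff_lt_mul hl, mul_comm]
    omega
  · rintro ⟨p, hp, ⟨hi1, hi2⟩, hj1, hj2⟩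
    have hdiv : (j - 1) / l = p := (Nat.div_eq_iff hl).2 ⟨by omega, by omega⟩
    have hm : p * m + m ≤ m * n := by nlinarith
    have hl' : p * l + l ≤ l * n := by nlinarith
    rw [hdiv]
    omega

theorem stmt4_general (l m n : ℕ) :
    invDC (lowestC l m n) = n * Nat.choose m 2 * Nat.choose l 2 := by
  have hblock : ∀ p, invDC (Ioc (p * m) ((p + 1) * m) ×ˢ Ioc (p * l) ((p + 1) * l)) =
      m.choose 2 * l.choose 2 := by
    intro p
    rw [invDC_product, Nat.card_Ioc, Nat.card_Ioc, add_one_mul, add_one_mul,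
      Nat.add_sub_cancel_left, Nat.add_sub_cancel_left]
  rw [lowestC_eq_biUnion, invDC_biUnion_of_lt, sum_congr rfl fun p _ => hblock p, sum_const,
    card_range, smul_eq_mul, mul_assoc]
  intro p q hpq x hx y hy
  simp only [mem_product, mem_Ioc] at hx hy
  have hm : (p + 1) * m ≤ q * m := Nat.mul_le_mul_right m hpq
  have hl : (p + 1) * l ≤ q * l := Nat.mul_le_mul_right l hpq
  omega

/-- `inv(C₀(l,m,n)) = n·C(m,2)·C(l,2)`. -/
theorem stmt4 (l m n : ℕ) (hl : 1 ≤ l) (hm : 2 ≤ m) (hn : 1 ≤ n) :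
    invDC (lowestC l m n) = n * Nat.choose m 2 * Nat.choose l 2 :=
  stmt4_general l m n
end

section
/- The highest generalized Dellac configuration C_1(l,m,n) has exactly C(nl,2)(m-1) + l²·C(n,2)(m-1)(m-2) + n·C(l,2)·C(m-1,2) inversions. -/
/-- The highest configuration `C₁(l,m,n)`: column `j` has a dot in row `⌈j/l⌉`, a dot in
row `(m-1)n + ⌈j/l⌉`, and (with `k = n - ⌈j/l⌉`) dots in rows `n + k(m-2)+1, ..., n+(k+1)(m-2)`. -/
def highestC (l m n : ℕ) : Finset (ℕ × ℕ) :=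
  (Finset.Icc 1 (m * n) ×ˢ Finset.Icc 1 (l * n)).filter
    (fun d =>
      d.1 = ceilDiv' d.2 l ∨ d.1 = (m - 1) * n + ceilDiv' d.2 l ∨
      (n + (n - ceilDiv' d.2 l) * (m - 2) + 1 ≤ d.1 ∧
        d.1 ≤ n + (n - ceilDiv' d.2 l + 1) * (m - 2)))

/-!
Group the inversions by the pair of columns `j₂ < j₁` holding their two dots. Every column of
the block `c = ⌈j/l⌉` of `C₁(l,m,n)` occupies the same `m` rows, and for blocks `c₂ < c₁` a row
of block `c₁` lies below a row of block `c₂` exactly when the first is not the top row of its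
block and the second is not the bottom one. Hence two columns of one block give `C(m,2)`
inversions and two columns of different blocks give `(m-1)²`; there are `n·C(l,2)` pairs of the
first kind and `l²·C(n,2)` of the second.
-/

open Finset

lemma invDC_filter_product (A B : Finset ℕ) (P : ℕ × ℕ → Prop) [DecidablePred P] :
    invDC {d ∈ A ×ˢ B | P d} =
      ∑ j₁ ∈ B, ∑ j₂ ∈ B with j₂ < j₁,
        #{x ∈ {i ∈ A | P (i, j₁)} ×ˢ {i ∈ A | P (i, j₂)} | x.1 < x.2} := by
  rw [invDC, card_eq_sum_card_fiberwise (f := fun p => (p.1.2, p.2.2))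
    (t := {j ∈ B ×ˢ B | j.2 < j.1}) (fun p hp => by simp_all), sum_filter, sum_product]
  refine sum_congr rfl fun j₁ _ => ?_
  rw [sum_filter]
  refine sum_congr rfl fun j₂ _ => ?_
  split_ifs with hlt
  · apply card_nbij' (fun p => (p.1.1, p.2.1)) (fun x => ((x.1, j₁), (x.2, j₂)))
    · rintro ⟨⟨i₁, j₁'⟩, ⟨i₂, j₂'⟩⟩ hp
      simp only [coe_filter, Set.mem_ofPred_eq, Prod.mk.injEq] at hp
      obtain ⟨h, rfl, rfl⟩ := hp
      simp_all
    · rintro ⟨i₁, i₂⟩ hx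
      simp_all
    · rintro ⟨⟨i₁, j₁'⟩, ⟨i₂, j₂'⟩⟩ hp
      simp only [coe_filter, Set.mem_ofPred_eq, Prod.mk.injEq] at hp
      obtain ⟨-, rfl, rfl⟩ := hp
      rfl
    · rintro ⟨i₁, i₂⟩ _
      rfl
  · rfl

lemma sum_Icc_sum_filter_lt_eq_sum_range_sum_range (N : ℕ) (f : ℕ → ℕ → ℕ) :
    ∑ j₁ ∈ Icc 1 N, ∑ j₂ ∈ Icc 1 N with j₂ < j₁, f j₁ j₂ =
      ∑ j₁ ∈ range N, ∑ j₂ ∈ range j₁, f (j₁ + 1) (j₂ + 1) := by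
  have shift (k : ℕ) : (range k).map (addRightEmbedding 1) = Icc 1 k := by
    rw [range_eq_Ico, map_add_right_Ico, zero_add, Ico_add_one_right_eq_Icc]
  rw [← shift, sum_map]
  refine sum_congr rfl fun j₁ hj₁ => ?_
  have lower : {j₂ ∈ Icc 1 N | j₂ < j₁ + 1} = Icc 1 j₁ := by
    ext j
    simp only [mem_range] at hj₁
    simp only [mem_filter, mem_Icc]
    omega
  rw [shift, addRightEmbedding_apply, lower, ← shift, sum_map]
  rfl

lemma sum_range_sum_range_ite_div_eq (l n a b : ℕ) :
    ∑ j₁ ∈ range (l * n), ∑ j₂ ∈ range j₁, (if j₁ / l = j₂ / l then a else b) =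
      n * l.choose 2 * a + l ^ 2 * n.choose 2 * b := by
  induction n with
  | zero => simp
  | succ n ih =>
    have new_column : ∀ r ∈ range l,
        ∑ j₂ ∈ range (l * n + r), (if (l * n + r) / l = j₂ / l then a else b) =
          r * a + l * n * b := by
      intro r hr
      rw [mem_range] at hr
      have hdiv : ∀ s < l, (l * n + s) / l = n := fun s hs => by
        rw [Nat.mul_add_div (by omega), Nat.div_eq_of_lt hs, add_zero]
      have earlier : ∀ j₂ ∈ range (l * n), (if n = j₂ / l then a else b) = b := fun j₂ hj₂ =>
        if_neg (Nat.div_lt_of_lt_mul (mem_range.1 hj₂)).ne'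
      have same : ∀ s ∈ range r, (if n = (l * n + s) / l then a else b) = a := fun s hs =>
        if_pos (hdiv s ((mem_range.1 hs).trans hr)).symm
      rw [sum_range_add, hdiv r hr, sum_congr rfl earlier, sum_congr rfl same]
      simp only [sum_const, card_range, smul_eq_mul]
      ring
    rw [Nat.mul_succ, sum_range_add, ih, sum_congr rfl new_column, sum_add_distrib, ← sum_mul,
      sum_range_id, ← Nat.choose_two_right, sum_const, card_range, smul_eq_mul,
      Nat.choose_succ_succ', Nat.choose_one_right]
    ring

lemma ceilDiv'_add_one {l : ℕ} (hl : 0 < l) (j : ℕ) : ceilDiv' (j + 1) l = j / l + 1 := by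
  rw [ceilDiv', show j + 1 + l - 1 = j + 1 * l by omega, Nat.add_mul_div_right _ _ hl]

/-- The rows of the dots of `C₁(l,m,n)` in a column `j` with `⌈j/l⌉ = c`. -/
def highRows (m n c : ℕ) : Finset ℕ :=
  insert c (insert ((m - 1) * n + c)
    (Icc (n + (n - c) * (m - 2) + 1) (n + (n - c + 1) * (m - 2))))

section highRows

variable {m n c : ℕ}

lemma filter_eq_highRows (hm : 2 ≤ m) (hc : 1 ≤ c) (hcn : c ≤ n) :
    {i ∈ Icc 1 (m * n) | i = c ∨ i = (m - 1) * n + c ∨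
      (n + (n - c) * (m - 2) + 1 ≤ i ∧ i ≤ n + (n - c + 1) * (m - 2))} = highRows m n c := by
  obtain ⟨k, rfl⟩ : ∃ k, m = k + 2 := ⟨m - 2, by omega⟩
  have : (n - c + 1) * k ≤ n * k := Nat.mul_le_mul_right k (by omega)
  ext i
  simp only [highRows, mem_filter, mem_Icc, mem_insert]
  grind

lemma card_highRows (hm : 2 ≤ m) (hc : 1 ≤ c) (hcn : c ≤ n) : #(highRows m n c) = m := by
  obtain ⟨k, rfl⟩ : ∃ k, m = k + 2 := ⟨m - 2, by omega⟩
  have : (n - c + 1) * k ≤ n * k := Nat.mul_le_mul_right k (by omega)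
  rw [highRows, card_insert_of_notMem, card_insert_of_notMem, Nat.card_Icc]
  · grind
  · rw [mem_Icc]
    grind
  · rw [mem_insert, mem_Icc]
    grind

lemma filter_lt_highRows_product_of_lt {c₁ c₂ : ℕ} (hm : 2 ≤ m) (hc₂ : 1 ≤ c₂) (hc : c₂ < c₁)
    (hc₁ : c₁ ≤ n) :
    {x ∈ highRows m n c₁ ×ˢ highRows m n c₂ | x.1 < x.2} =
      (highRows m n c₁).erase ((m - 1) * n + c₁) ×ˢ (highRows m n c₂).erase c₂ := by
  obtain ⟨k, rfl⟩ : ∃ k, m = k + 2 := ⟨m - 2, by omega⟩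
  have : (n - c₁ + 1) * k ≤ (n - c₂) * k := Nat.mul_le_mul_right k (by omega)
  have : (n - c₂ + 1) * k ≤ n * k := Nat.mul_le_mul_right k (by omega)
  ext ⟨i₁, i₂⟩
  simp only [highRows, mem_filter, mem_product, mem_erase, mem_insert, mem_Icc]
  grind

lemma card_filter_lt_highRows_product {c₁ c₂ : ℕ} (hm : 2 ≤ m) (hc₂ : 1 ≤ c₂) (hc : c₂ ≤ c₁)
    (hc₁ : c₁ ≤ n) :
    #{x ∈ highRows m n c₁ ×ˢ highRows m n c₂ | x.1 < x.2} =
      if c₁ = c₂ then m.choose 2 else (m - 1) ^ 2 := by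
  split_ifs with h
  · subst h
    rw [card_product_filter_lt, card_highRows hm hc₂ hc₁]
  · rw [filter_lt_highRows_product_of_lt hm hc₂ (lt_of_le_of_ne hc (Ne.symm h)) hc₁,
      card_product, card_erase_of_mem (by simp [highRows]), card_erase_of_mem (by simp [highRows]),
      card_highRows hm (by omega) hc₁, card_highRows hm hc₂ (by omega), sq]

end highRows

lemma invDC_highestC (l m n : ℕ) (hl : 0 < l) (hm : 2 ≤ m) :
    invDC (highestC l m n) = n * l.choose 2 * m.choose 2 + l ^ 2 * n.choose 2 * (m - 1) ^ 2 := by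
  rw [highestC, invDC_filter_product, sum_Icc_sum_filter_lt_eq_sum_range_sum_range,
    ← sum_range_sum_range_ite_div_eq]
  simp only [ceilDiv'_add_one hl]
  refine sum_congr rfl fun j₁ h₁ => sum_congr rfl fun j₂ h₂ => ?_
  rw [mem_range] at h₁ h₂
  have hc₁ : j₁ / l + 1 ≤ n := Nat.div_lt_of_lt_mul h₁
  have hc : j₂ / l ≤ j₁ / l := Nat.div_le_div_right h₂.le
  rw [filter_eq_highRows hm le_add_self hc₁, filter_eq_highRows hm le_add_self (by omega),
    card_filter_lt_highRows_product hm le_add_self (by omega) hc₁]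
  simp only [Nat.add_right_cancel_iff]

theorem stmt5_general (l m n : ℕ) (hl : 1 ≤ l) (hm : 2 ≤ m) :
    invDC (highestC l m n) =
      Nat.choose (n * l) 2 * (m - 1) + l ^ 2 * Nat.choose n 2 * (m - 1) * (m - 2)
        + n * Nat.choose l 2 * Nat.choose (m - 1) 2 := by
  rw [invDC_highestC l m n hl hm]
  -- `C(nl,2) = n·C(l,2) + l²·C(n,2)`, `C(m,2) = C(m-1,2) + (m-1)`, `(m-1)² = (m-1)(m-2) + (m-1)`
  obtain ⟨k, rfl⟩ : ∃ k, m = k + 2 := ⟨m - 2, by omega⟩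
  simp only [Nat.add_sub_cancel, show k + 2 - 1 = k + 1 from rfl]
  qify
  simp only [Nat.cast_choose_two]
  push_cast
  ring

/-- `inv(C₁(l,m,n)) = C(nl,2)(m-1) + l²·C(n,2)(m-1)(m-2) + n·C(l,2)·C(m-1,2)`. -/
theorem stmt5 (l m n : ℕ) (hl : 1 ≤ l) (hm : 2 ≤ m) (hn : 1 ≤ n) :
    invDC (highestC l m n) =
      Nat.choose (n * l) 2 * (m - 1) + l ^ 2 * Nat.choose n 2 * (m - 1) * (m - 2)
        + n * Nat.choose l 2 * Nat.choose (m - 1) 2 :=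
  stmt5_general l m n hl hm
end

section
/- An elementary switch on a generalized Dellac configuration decreases the number of inversions by exactly 1: if C has dots at positions (i_1,j_1) and (i_2,j_2) with i_1 < i_2, j_1 < j_2 (matrix coordinates) and no other dots in the rectangle [i_1,i_2] × [j_1,j_2], then replacing these two dots by dots at (i_1,j_2) and (i_2,j_1) yields a configuration C' with inv(C') = inv(C) - 1. -/
/-- Inversion indicator for a pair of dots. -/
def gInv (x y : ℕ × ℕ) : ℕ := if x.1 < y.1 ∧ y.2 < x.2 then 1 else 0

lemma inv_eq_sum (S : Finset (ℕ × ℕ)) :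
    invDC S = ∑ x ∈ S, ∑ y ∈ S, gInv x y := by
  rw [invDC, Finset.card_filter, Finset.sum_product]
  rfl

lemma inv_insert_insert (u v : ℕ × ℕ) (D : Finset (ℕ × ℕ)) (huv : u ≠ v)
    (hu : u ∉ D) (hv : v ∉ D) :
    invDC (insert u (insert v D)) =
      (gInv u u + gInv u v + gInv v u + gInv v v
        + ∑ d ∈ D, (gInv u d + gInv d u + gInv v d + gInv d v))
        + ∑ d ∈ D, ∑ d' ∈ D, gInv d d' := by
  have hu' : u ∉ insert v D := by simp [huv, hu]
  rw [inv_eq_sum]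
  simp only [Finset.sum_insert hu', Finset.sum_insert hv, Finset.sum_add_distrib]
  ring

lemma keyInv (i₁ i₂ j₁ j₂ x y : ℕ) (hi : i₁ < i₂) (hj : j₂ < j₁)
    (hout : ¬(i₁ ≤ x ∧ x ≤ i₂ ∧ j₂ ≤ y ∧ y ≤ j₁)) :
    gInv (i₁, j₂) (x, y) + gInv (x, y) (i₁, j₂)
      + gInv (i₂, j₁) (x, y) + gInv (x, y) (i₂, j₁)
    = gInv (i₁, j₁) (x, y) + gInv (x, y) (i₁, j₁)
      + gInv (i₂, j₂) (x, y) + gInv (x, y) (i₂, j₂) := by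
  simp only [gInv]
  split_ifs <;> omega

theorem stmt7 (l m n : ℕ) (hl : 1 ≤ l) (hm : 2 ≤ m) (hn : 1 ≤ n)
    (C : Finset (ℕ × ℕ)) (hC : IsGenDellac l m n C)
    (i₁ j₁ i₂ j₂ : ℕ) (h1 : (i₁, j₁) ∈ C) (h2 : (i₂, j₂) ∈ C)
    (hi : i₁ < i₂) (hj : j₂ < j₁)
    (hrect : ∀ d ∈ C, i₁ ≤ d.1 → d.1 ≤ i₂ → j₂ ≤ d.2 → d.2 ≤ j₁ →
      d = (i₁, j₁) ∨ d = (i₂, j₂)) :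
    invDC (insert (i₁, j₂) (insert (i₂, j₁) ((C.erase (i₁, j₁)).erase (i₂, j₂))))
      = invDC C - 1 := by
  classical
  have hine : i₁ ≠ i₂ := Nat.ne_of_lt hi
  have hjne : j₂ ≠ j₁ := Nat.ne_of_lt hj
  set D : Finset (ℕ × ℕ) := (C.erase (i₁, j₁)).erase (i₂, j₂) with hD
  have haD : (i₁, j₁) ∉ D := by simp [hD, Finset.mem_erase]
  have hbD : (i₂, j₂) ∉ D := by simp [hD, Finset.mem_erase]
  have hab : (i₁, j₁) ≠ (i₂, j₂) := by simp [hine]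
  have ha'b' : (i₁, j₂) ≠ (i₂, j₁) := by simp [hine]
  have ha'C : (i₁, j₂) ∉ C := by
    intro h
    rcases hrect _ h le_rfl (le_of_lt hi) le_rfl (le_of_lt hj) with h' | h' <;>
      simp_all
  have hb'C : (i₂, j₁) ∉ C := by
    intro h
    rcases hrect _ h (le_of_lt hi) le_rfl (le_of_lt hj) le_rfl with h' | h' <;>
      simp_all
  have ha'D : (i₁, j₂) ∉ D := fun h => ha'C (Finset.mem_of_mem_erase (Finset.mem_of_mem_erase h))
  have hb'D : (i₂, j₁) ∉ D := fun h => hb'C (Finset.mem_of_mem_erase (Finset.mem_of_mem_erase h))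
  have hCeq : C = insert (i₁, j₁) (insert (i₂, j₂) D) := by
    ext d
    simp only [Finset.mem_insert, hD, Finset.mem_erase]
    constructor
    · intro hd
      by_cases h' : d = (i₁, j₁)
      · exact Or.inl h'
      · by_cases h'' : d = (i₂, j₂)
        · exact Or.inr (Or.inl h'')
        · exact Or.inr (Or.inr ⟨h'', h', hd⟩)
    · rintro (rfl | rfl | ⟨-, -, hd⟩) <;> assumption
  have hdout : ∀ d ∈ D, ¬(i₁ ≤ d.1 ∧ d.1 ≤ i₂ ∧ j₂ ≤ d.2 ∧ d.2 ≤ j₁) := by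
    intro d hd hcon
    have hdC : d ∈ C := Finset.mem_of_mem_erase (Finset.mem_of_mem_erase hd)
    rcases hrect d hdC hcon.1 hcon.2.1 hcon.2.2.1 hcon.2.2.2 with rfl | rfl
    · exact haD hd
    · exact hbD hd
  rw [hCeq] at *
  rw [inv_insert_insert _ _ _ hab haD hbD, inv_insert_insert _ _ _ ha'b' ha'D hb'D]
  have hsum : ∑ d ∈ D, (gInv (i₁, j₂) d + gInv d (i₁, j₂) + gInv (i₂, j₁) d + gInv d (i₂, j₁))
      = ∑ d ∈ D, (gInv (i₁, j₁) d + gInv d (i₁, j₁) + gInv (i₂, j₂) d + gInv d (i₂, j₂)) := by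
    refine Finset.sum_congr rfl fun d hd => ?_
    have := keyInv i₁ i₂ j₁ j₂ d.1 d.2 hi hj (hdout d hd)
    simpa using this
  rw [hsum]
  have e1 : gInv (i₁, j₂) (i₁, j₂) = 0 := by simp [gInv]
  have e2 : gInv (i₁, j₂) (i₂, j₁) = 0 := by simp [gInv]; omega
  have e3 : gInv (i₂, j₁) (i₁, j₂) = 0 := by simp [gInv]; omega
  have e4 : gInv (i₂, j₁) (i₂, j₁) = 0 := by simp [gInv]
  have f1 : gInv (i₁, j₁) (i₁, j₁) = 0 := by simp [gInv]
  have f2 : gInv (i₁, j₁) (i₂, j₂) = 1 := by simp [gInv, hi, hj]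
  have f3 : gInv (i₂, j₂) (i₁, j₁) = 0 := by simp [gInv]; omega
  have f4 : gInv (i₂, j₂) (i₂, j₂) = 0 := by simp [gInv]
  rw [e1, e2, e3, e4, f1, f2, f3, f4]
  omega
end

section
/- A pair of dots (d_p, d_q) with p < q forms an inversion of a generalized Dellac configuration C if and only if (p, q) is an inversion of the word τ_C, i.e., q appears to the left of p in τ_C; consequently inv(C) = inv(τ_C). -/
/-- The number of the dot `d` in the enumeration of the dots of `C` from bottom to top
and, within each row, from left to right (1-based). -/
def rank1 (C : Finset (ℕ × ℕ)) (d : ℕ × ℕ) : ℕ :=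
  (C.filter (fun e => e.1 < d.1 ∨ (e.1 = d.1 ∧ e.2 ≤ d.2))).card

/-- The number of the dot `d` in the reading order from left to right and, within each
column, from bottom to top (1-based). -/
def rank2 (C : Finset (ℕ × ℕ)) (d : ℕ × ℕ) : ℕ :=
  (C.filter (fun e => e.2 < d.2 ∨ (e.2 = d.2 ∧ e.1 ≤ d.1))).card

lemma rank1_lt_of {C : Finset (ℕ × ℕ)} {a b : ℕ × ℕ} (hb : b ∈ C)
    (h : a.1 < b.1 ∨ (a.1 = b.1 ∧ a.2 < b.2)) : rank1 C a < rank1 C b := by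
  apply Finset.card_lt_card
  constructor
  · intro e he
    simp only [Finset.mem_filter] at he ⊢
    exact ⟨he.1, by omega⟩
  · intro hsub
    have hmem : b ∈ C.filter (fun e => e.1 < a.1 ∨ (e.1 = a.1 ∧ e.2 ≤ a.2)) :=
      hsub (Finset.mem_filter.mpr ⟨hb, Or.inr ⟨rfl, le_refl _⟩⟩)
    simp only [Finset.mem_filter] at hmem
    omega

lemma rank2_lt_of {C : Finset (ℕ × ℕ)} {a b : ℕ × ℕ} (hb : b ∈ C)
    (h : a.2 < b.2 ∨ (a.2 = b.2 ∧ a.1 < b.1)) : rank2 C a < rank2 C b := by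
  apply Finset.card_lt_card
  constructor
  · intro e he
    simp only [Finset.mem_filter] at he ⊢
    exact ⟨he.1, by omega⟩
  · intro hsub
    have hmem : b ∈ C.filter (fun e => e.2 < a.2 ∨ (e.2 = a.2 ∧ e.1 ≤ a.1)) :=
      hsub (Finset.mem_filter.mpr ⟨hb, Or.inr ⟨rfl, le_refl _⟩⟩)
    simp only [Finset.mem_filter] at hmem
    omega

lemma lex_of_rank1_lt {C : Finset (ℕ × ℕ)} {a b : ℕ × ℕ} (ha : a ∈ C)
    (h : rank1 C a < rank1 C b) : a.1 < b.1 ∨ (a.1 = b.1 ∧ a.2 < b.2) := by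
  by_contra hcon
  push_neg at hcon
  by_cases heq : b.1 = a.1 ∧ b.2 = a.2
  · have : rank1 C a = rank1 C b := by
      unfold rank1
      rw [heq.1, heq.2]
    omega
  · have : rank1 C b < rank1 C a := rank1_lt_of ha (by omega)
    omega

/-- a pair of dots `(d_p, d_q)` with `p < q` (numbering `rank1`) is an
inversion of `C` iff `q` occurs to the left of `p` in the word `τ_C` (i.e. the reading
rank `rank2` of `d_q` is smaller than that of `d_p`); consequently `inv(C) = inv(τ_C)`. -/
theorem stmt8 (l m n : ℕ) (hl : 1 ≤ l) (hm : 2 ≤ m) (hn : 1 ≤ n)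
    (C : Finset (ℕ × ℕ)) (hC : IsGenDellac l m n C) :
    (∀ a ∈ C, ∀ b ∈ C, rank1 C a < rank1 C b →
      ((a.1 < b.1 ∧ b.2 < a.2) ↔ rank2 C b < rank2 C a)) ∧
    invDC C = ((C ×ˢ C).filter
      (fun p => rank1 C p.1 < rank1 C p.2 ∧ rank2 C p.2 < rank2 C p.1)).card := by
  have main : ∀ a ∈ C, ∀ b ∈ C, rank1 C a < rank1 C b →
      ((a.1 < b.1 ∧ b.2 < a.2) ↔ rank2 C b < rank2 C a) := by
    intro a ha b hb hr
    have hlex := lex_of_rank1_lt ha hr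
    constructor
    · intro ⟨h1, h2⟩
      exact rank2_lt_of ha (Or.inl h2)
    · intro hr2
      have hba : b.2 < a.2 := by
        by_contra hle
        have : rank2 C a < rank2 C b := rank2_lt_of hb (by omega)
        omega
      exact ⟨by omega, hba⟩
  refine ⟨main, ?_⟩
  unfold invDC
  congr 1
  apply Finset.filter_congr
  intro p hp
  simp only [Finset.mem_product] at hp
  constructor
  · intro ⟨h1, h2⟩
    exact ⟨rank1_lt_of hp.2 (Or.inl h1), rank2_lt_of hp.1 (Or.inl h2)⟩
  · intro ⟨h1, h2⟩
    exact (main p.1 hp.1 p.2 hp.2 h1).mpr h2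
end

section
/- For a partition λ with λ_1 = n-1 (padded with zeros to length n+1) and bottom boundary δ_{n-1}, the partition function satisfies the recurrence 𝔠^n(λ) = Σ_{i=2}^{n+1} q^{i-2} 𝔠^{n-1}(λ^i), where λ^i is λ with λ_1 and λ_i removed. -/
/-!
Since `λ₁ = n - 1`, the dot of row `1` must sit in column `n`. The second dot of column `n` sits
in some row `i`, and the staircase `δ_{n-1}` forces `2 ≤ i ≤ n + 1`. Deleting rows `1` and `i`
and column `n` (rows above `i` move up by one, rows below it by two) is a bijection onto the
configurations of size `n - 1` with boundaries `λ^i` and `δ_{n-2}`. Every other dot lies in a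
column `< n`, so `(1, n)` is in no inversion and `(i, n)` in exactly `i - 2`, one with the dot of
each row `2, …, i - 1`.
-/

open scoped Classical

/-- A Dellac configuration of size `n` with boundaries `λ`, `μ`: `2n` dots `(i,j)`
(`i` = row from top, `j` = column, both 1-based) in a `2n × n` grid, one dot per row,
two dots per column, with no dots in the top-left region of `λ` (row `i ≤ n-1` forbids
columns `1..λ_i`) nor in the bottom-right region of `μ` (row `i ≥ n+2` forbids columns
`n+1-μ_{2n+1-i}..n`). -/
def IsBConfig (n : ℕ) (lam mu : List ℕ) (C : Finset (ℕ × ℕ)) : Prop :=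
  (∀ d ∈ C, 1 ≤ d.1 ∧ d.1 ≤ 2 * n ∧ 1 ≤ d.2 ∧ d.2 ≤ n) ∧
  (∀ i ∈ Finset.Icc 1 (2 * n), (C.filter (fun d => d.1 = i)).card = 1) ∧
  (∀ j ∈ Finset.Icc 1 n, (C.filter (fun d => d.2 = j)).card = 2) ∧
  (∀ d ∈ C, d.1 ≤ n - 1 → lam.getD (d.1 - 1) 0 < d.2) ∧
  (∀ d ∈ C, n + 2 ≤ d.1 → d.2 + mu.getD (2 * n - d.1) 0 ≤ n)

/-- Number of inversions: pairs of dots with one strictly lower (larger row index from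
the top) and strictly to the right of the other. -/
def invB (C : Finset (ℕ × ℕ)) : ℕ :=
  ((C ×ˢ C).filter (fun p => p.1.1 < p.2.1 ∧ p.1.2 < p.2.2)).card

/-- The partition function `𝔠ⁿ(λ,μ) = Σ_C q^{inv(C)}` over all Dellac configurations of
size `n` with boundaries `λ` and `μ`. -/
noncomputable def partFun (n : ℕ) (lam mu : List ℕ) : Polynomial ℕ :=
  ∑ C ∈ ((Finset.Icc 1 (2 * n) ×ˢ Finset.Icc 1 n).powerset.filter
      (fun C => IsBConfig n lam mu C)), (Polynomial.X : Polynomial ℕ) ^ invB C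

/-- The staircase partition `δ_k = (k, k-1, ..., 1)`. -/
def delta (k : ℕ) : List ℕ := (List.range k).map (fun i => k - i)

/-- `𝔠ⁿ(λ) := 𝔠ⁿ(λ, δ_{n-1})`. -/
noncomputable def cF (n : ℕ) (lam : List ℕ) : Polynomial ℕ := partFun n lam (delta (n - 1))

/-- `λ` is a partition inside the staircase `δ_{n-1}`. -/
def IsPartIn (n : ℕ) (lam : List ℕ) : Prop :=
  lam.length ≤ n - 1 ∧ List.Pairwise (· ≥ ·) lam ∧
    ∀ i, i < lam.length → lam.getD i 0 ≤ n - 1 - i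

/-- Pad a partition with zeros to length `k`. -/
def padTo (k : ℕ) (lam : List ℕ) : List ℕ := lam ++ List.replicate (k - lam.length) 0

open Finset Polynomial

theorem IsPartIn.getD_eq_zero {n : ℕ} {lam : List ℕ} (h : IsPartIn n lam) {k : ℕ}
    (hk : n - 1 ≤ k) : lam.getD k 0 = 0 :=
  List.getD_eq_default _ _ (h.1.trans hk)

theorem IsPartIn.getD_lt {n : ℕ} {lam : List ℕ} (h : IsPartIn n lam) (hn : 1 ≤ n) (k : ℕ) :
    lam.getD k 0 < n := by
  rcases lt_or_ge k lam.length with hk | hk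
  · have := h.2.2 k hk
    omega
  · rw [List.getD_eq_default _ _ hk]
    omega

theorem IsBConfig.eq_of_fst_eq {n : ℕ} {lam mu : List ℕ} {C : Finset (ℕ × ℕ)}
    (hC : IsBConfig n lam mu C) {d d' : ℕ × ℕ} (hd : d ∈ C) (hd' : d' ∈ C) (h : d.1 = d'.1) :
    d = d' :=
  have hb := hC.1 d hd
  card_le_one.1 (hC.2.1 d.1 (mem_Icc.2 ⟨hb.1, hb.2.1⟩)).le d (mem_filter.2 ⟨hd, rfl⟩) d'
    (mem_filter.2 ⟨hd', h.symm⟩)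

namespace Dellac

lemma getD_delta (k j : ℕ) : (delta k).getD j 0 = k - j := by
  rw [List.getD_eq_getElem?_getD]
  unfold delta
  by_cases hj : j < k <;> simp [hj]
  omega

lemma getD_padTo (k : ℕ) (l : List ℕ) (j : ℕ) : (padTo k l).getD j 0 = l.getD j 0 := by
  simp only [padTo, List.getD_eq_getElem?_getD, List.getElem?_append, List.getElem?_replicate]
  split_ifs <;> simp_all

/-- The paper's `λ^i`. -/
def reducedPartition (n : ℕ) (lam : List ℕ) (i : ℕ) : List ℕ :=
  ((padTo (n + 1) lam).tail).eraseIdx (i - 2)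

lemma getD_reducedPartition (n : ℕ) (lam : List ℕ) (i k : ℕ) :
    (reducedPartition n lam i).getD k 0 = lam.getD (if k < i - 2 then k + 1 else k + 2) 0 := by
  simp only [reducedPartition, List.getD_eq_getElem?_getD, List.getElem?_eraseIdx,
    List.getElem?_tail]
  split_ifs <;> rw [← List.getD_eq_getElem?_getD, getD_padTo, List.getD_eq_getElem?_getD]

/-- Row `s` of a configuration of size `n - 1` becomes row `liftRow i s` once rows `1` and `i`
are inserted. -/
def liftRow (i s : ℕ) : ℕ := if s + 1 < i then s + 1 else s + 2

def dropRow (i r : ℕ) : ℕ := if r < i then r - 1 else r - 2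

lemma liftRow_strictMono (i : ℕ) : StrictMono (liftRow i) := by
  intro s t h
  unfold liftRow
  split_ifs <;> omega

lemma prodMap_liftRow_injective (i : ℕ) : Function.Injective (Prod.map (liftRow i) (id : ℕ → ℕ)) :=
  Prod.map_injective.2 ⟨(liftRow_strictMono i).injective, Function.injective_id⟩

lemma liftRow_ne (i s : ℕ) : liftRow i s ≠ i := by
  unfold liftRow
  split_ifs <;> omega

lemma two_le_liftRow (i : ℕ) {s : ℕ} (hs : 1 ≤ s) : 2 ≤ liftRow i s := by
  unfold liftRow
  split_ifs <;> omega

lemma dropRow_liftRow (i s : ℕ) : dropRow i (liftRow i s) = s := by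
  unfold liftRow dropRow
  split_ifs <;> omega

lemma liftRow_dropRow {i r : ℕ} (hr : 2 ≤ r) (hri : r ≠ i) : liftRow i (dropRow i r) = r := by
  unfold liftRow dropRow
  split_ifs <;> omega

lemma getD_reducedPartition_sub_one (n : ℕ) (lam : List ℕ) (i : ℕ) {s : ℕ} (hs : 1 ≤ s) :
    (reducedPartition n lam i).getD (s - 1) 0 = lam.getD (liftRow i s - 1) 0 := by
  rw [getD_reducedPartition, liftRow]
  congr 1
  split_ifs <;> omega

lemma getD_reducedPartition_eq_zero {n : ℕ} {lam : List ℕ} {i : ℕ}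
    (hlam : ∀ k, n - 1 ≤ k → lam.getD k 0 = 0) (k : ℕ) (hk : n - 1 - 1 ≤ k) : (reducedPartition n lam i).getD k 0 = 0 := by
  rw [getD_reducedPartition]
  exact hlam _ (by split_ifs <;> omega)

/-- The conditions on a single dot `(r, c)` when the bottom boundary is `δ_{m-1}`, whose region
is `r + c > 2m + 1`. -/
def Admissible (m : ℕ) (l : List ℕ) (d : ℕ × ℕ) : Prop :=
  1 ≤ d.1 ∧ d.2 ≤ m ∧ l.getD (d.1 - 1) 0 < d.2 ∧ d.1 + d.2 ≤ 2 * m + 1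

def OneDotPerRow (m : ℕ) (C : Finset (ℕ × ℕ)) : Prop :=
  ∀ r ∈ Icc 1 (2 * m), #(C.filter (·.1 = r)) = 1

def TwoDotsPerCol (m : ℕ) (C : Finset (ℕ × ℕ)) : Prop :=
  ∀ c ∈ Icc 1 m, #(C.filter (·.2 = c)) = 2

section Staircase

variable {m : ℕ} {l : List ℕ}

lemma boundary_conditions_iff_admissible (hl : ∀ k, m - 1 ≤ k → l.getD k 0 = 0) (d : ℕ × ℕ) :
    ((1 ≤ d.1 ∧ d.1 ≤ 2 * m ∧ 1 ≤ d.2 ∧ d.2 ≤ m) ∧ (d.1 ≤ m - 1 → l.getD (d.1 - 1) 0 < d.2) ∧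
      (m + 2 ≤ d.1 → d.2 + (delta (m - 1)).getD (2 * m - d.1) 0 ≤ m)) ↔ Admissible m l d := by
  rw [getD_delta, Admissible]
  rcases le_or_gt d.1 (m - 1) with h | h
  · omega
  · rw [hl _ (by omega)]
    omega

theorem isBConfig_delta_iff (hl : ∀ k, m - 1 ≤ k → l.getD k 0 = 0) {C : Finset (ℕ × ℕ)} :
    IsBConfig m l (delta (m - 1)) C ↔
      (∀ d ∈ C, Admissible m l d) ∧ OneDotPerRow m C ∧ TwoDotsPerCol m C := by
  simp only [← boundary_conditions_iff_admissible hl]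
  constructor
  · rintro ⟨hb, hr, hc, ht, hbot⟩
    exact ⟨fun d hd => ⟨hb d hd, ht d hd, hbot d hd⟩, hr, hc⟩
  · rintro ⟨h, hr, hc⟩
    exact ⟨fun d hd => (h d hd).1, hr, hc, fun d hd => (h d hd).2.1, fun d hd => (h d hd).2.2⟩

end Staircase

def liftConfig (n i : ℕ) (D : Finset (ℕ × ℕ)) : Finset (ℕ × ℕ) :=
  insert (1, n) (insert (i, n) (D.image (Prod.map (liftRow i) id)))

def reduceConfig (n i : ℕ) (C : Finset (ℕ × ℕ)) : Finset (ℕ × ℕ) :=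
  (C.filter (·.2 ≠ n)).image (Prod.map (dropRow i) id)

section Lift

variable {n i : ℕ} {D : Finset (ℕ × ℕ)}

lemma filter_fst_liftConfig {s : ℕ} (hs : 1 ≤ s) :
    (liftConfig n i D).filter (·.1 = liftRow i s) =
      (D.filter (·.1 = s)).image (Prod.map (liftRow i) id) := by
  have h1 : 1 ≠ liftRow i s := by have := two_le_liftRow i hs; omega
  rw [liftConfig, filter_insert, filter_insert, if_neg h1, if_neg (liftRow_ne i s).symm,
    filter_image]
  simp only [Prod.map_fst, (liftRow_strictMono i).injective.eq_iff]

lemma filter_fst_liftConfig_one (hi : 2 ≤ i) (hD : ∀ d ∈ D, 1 ≤ d.1) :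
    (liftConfig n i D).filter (·.1 = 1) = {(1, n)} := by
  have hempty : (D.image (Prod.map (liftRow i) id)).filter (·.1 = 1) = ∅ := by
    simp only [filter_eq_empty_iff, forall_mem_image, Prod.map_fst]
    exact fun d hd => by have := two_le_liftRow i (hD d hd); omega
  rw [liftConfig, filter_insert, filter_insert, if_pos rfl, if_neg (by dsimp only; omega), hempty,
    insert_empty]

lemma filter_fst_liftConfig_self (hi : 2 ≤ i) :
    (liftConfig n i D).filter (·.1 = i) = {(i, n)} := by
  have hempty : (D.image (Prod.map (liftRow i) id)).filter (·.1 = i) = ∅ := by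
    simp only [filter_eq_empty_iff, forall_mem_image, Prod.map_fst]
    exact fun d _ => liftRow_ne i d.1
  rw [liftConfig, filter_insert, filter_insert, if_pos rfl, if_neg (by dsimp only; omega), hempty,
    insert_empty]

lemma filter_snd_liftConfig {c : ℕ} (hc : c ≠ n) :
    (liftConfig n i D).filter (·.2 = c) = (D.filter (·.2 = c)).image (Prod.map (liftRow i) id) := by
  rw [liftConfig, filter_insert, filter_insert, if_neg hc.symm, if_neg hc.symm, filter_image]
  rfl

lemma filter_snd_liftConfig_self (hD : ∀ d ∈ D, d.2 < n) :
    (liftConfig n i D).filter (·.2 = n) = {(1, n), (i, n)} := by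
  have hempty : (D.image (Prod.map (liftRow i) id)).filter (·.2 = n) = ∅ := by
    simp only [filter_eq_empty_iff, forall_mem_image, Prod.map_snd, id]
    exact fun d hd => (hD d hd).ne
  rw [liftConfig, filter_insert, filter_insert, if_pos rfl, if_pos rfl, hempty]
  rfl

lemma oneDotPerRow_liftConfig_iff (hi : 2 ≤ i) (hin : i ≤ n + 1) (hD : ∀ d ∈ D, 1 ≤ d.1) :
    OneDotPerRow (n - 1) D ↔ OneDotPerRow n (liftConfig n i D) := by
  constructor
  · intro h r hr
    rw [mem_Icc] at hr
    obtain rfl | hr1 := eq_or_ne r 1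
    · rw [filter_fst_liftConfig_one hi hD, card_singleton]
    obtain rfl | hri := eq_or_ne r i
    · rw [filter_fst_liftConfig_self hi, card_singleton]
    have hs : dropRow i r ∈ Icc 1 (2 * (n - 1)) := by
      rw [mem_Icc, dropRow]
      split_ifs <;> omega
    rw [← liftRow_dropRow (by omega) hri, filter_fst_liftConfig (mem_Icc.1 hs).1,
      card_image_of_injective _ (prodMap_liftRow_injective i)]
    exact h _ hs
  · intro h s hs
    rw [mem_Icc] at hs
    rw [← card_image_of_injective _ (prodMap_liftRow_injective i), ← filter_fst_liftConfig hs.1]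
    refine h _ (mem_Icc.2 ⟨by linarith [two_le_liftRow i hs.1], ?_⟩)
    unfold liftRow
    split_ifs <;> omega

lemma twoDotsPerCol_liftConfig_iff (hi : 2 ≤ i) (hD : ∀ d ∈ D, d.2 < n) :
    TwoDotsPerCol (n - 1) D ↔ TwoDotsPerCol n (liftConfig n i D) := by
  have h1i : ((1 : ℕ), n) ≠ (i, n) := by simp only [ne_eq, Prod.mk.injEq]; omega
  constructor
  · intro h c hc
    rw [mem_Icc] at hc
    obtain rfl | hcn := eq_or_ne c n
    · rw [filter_snd_liftConfig_self hD, card_pair h1i]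
    rw [filter_snd_liftConfig hcn, card_image_of_injective _ (prodMap_liftRow_injective i)]
    exact h c (mem_Icc.2 ⟨hc.1, by omega⟩)
  · intro h c hc
    rw [mem_Icc] at hc
    rw [← card_image_of_injective _ (prodMap_liftRow_injective i),
      ← filter_snd_liftConfig (show c ≠ n by omega)]
    exact h c (mem_Icc.2 ⟨hc.1, by omega⟩)

lemma admissible_reducedPartition_iff {lam : List ℕ} {s c : ℕ} (hs : 1 ≤ s) (hc : c < n)
    (hin : i ≤ n + 1) :
    Admissible (n - 1) (reducedPartition n lam i) (s, c) ↔ Admissible n lam (liftRow i s, c) := by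
  unfold Admissible
  dsimp only
  rw [getD_reducedPartition_sub_one n lam i hs]
  unfold liftRow
  split_ifs <;> omega

lemma forall_admissible_liftConfig_iff {lam : List ℕ} (hn : 1 ≤ n) (h0 : lam.getD 0 0 = n - 1)
    (hlt : lam.getD (i - 1) 0 < n) (hi : 1 ≤ i) (hin : i ≤ n + 1)
    (hD : ∀ d ∈ D, 1 ≤ d.1 ∧ d.2 < n) :
    (∀ d ∈ D, Admissible (n - 1) (reducedPartition n lam i) d) ↔
      ∀ d ∈ liftConfig n i D, Admissible n lam d := by
  have h1n : Admissible n lam (1, n) := ⟨le_rfl, le_rfl, show lam.getD 0 0 < n by omega,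
    show 1 + n ≤ 2 * n + 1 by omega⟩
  have hin' : Admissible n lam (i, n) := ⟨show 1 ≤ i by omega, le_rfl, hlt,
    show i + n ≤ 2 * n + 1 by omega⟩
  simp only [liftConfig, forall_mem_insert, forall_mem_image, Prod.map, id, h1n, hin', true_and]
  exact forall₂_congr fun d hd => admissible_reducedPartition_iff (hD d hd).1 (hD d hd).2 hin

theorem isBConfig_liftConfig_iff {lam : List ℕ} (hn : 1 ≤ n)
    (hlam : ∀ k, n - 1 ≤ k → lam.getD k 0 = 0) (h0 : lam.getD 0 0 = n - 1)
    (hlt : lam.getD (i - 1) 0 < n) (hi : 2 ≤ i) (hin : i ≤ n + 1)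
    (hD : ∀ d ∈ D, 1 ≤ d.1 ∧ d.2 < n) :
    IsBConfig (n - 1) (reducedPartition n lam i) (delta (n - 1 - 1)) D ↔
      IsBConfig n lam (delta (n - 1)) (liftConfig n i D) := by
  rw [isBConfig_delta_iff (getD_reducedPartition_eq_zero hlam), isBConfig_delta_iff hlam,
    forall_admissible_liftConfig_iff hn h0 hlt (by omega) hin hD,
    oneDotPerRow_liftConfig_iff hi hin fun d hd => (hD d hd).1,
    twoDotsPerCol_liftConfig_iff hi fun d hd => (hD d hd).2]

lemma reduceConfig_liftConfig (hD : ∀ d ∈ D, d.2 < n) :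
    reduceConfig n i (liftConfig n i D) = D := by
  have hfilter : (liftConfig n i D).filter (·.2 ≠ n) = D.image (Prod.map (liftRow i) id) := by
    rw [liftConfig, filter_insert, filter_insert, if_neg (not_not.2 rfl), if_neg (not_not.2 rfl),
      filter_true_of_mem]
    simp only [forall_mem_image, Prod.map_snd, id]
    exact fun d hd => (hD d hd).ne
  rw [reduceConfig, hfilter, image_image]
  conv_rhs => rw [← image_id (s := D)]
  exact image_congr fun d _ => Prod.ext (dropRow_liftRow i d.1) rfl

end Lift

section Inversions

lemma invB_eq_sum (C : Finset (ℕ × ℕ)) :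
    invB C = ∑ a ∈ C, ∑ b ∈ C, if a.1 < b.1 ∧ a.2 < b.2 then 1 else 0 := by
  rw [invB, card_filter, sum_product]

lemma invB_insert {p : ℕ × ℕ} {C : Finset (ℕ × ℕ)} (hp : p ∉ C) :
    invB (insert p C) = invB C + #(C.filter fun b => p.1 < b.1 ∧ p.2 < b.2) +
      #(C.filter fun a => a.1 < p.1 ∧ a.2 < p.2) := by
  simp only [invB_eq_sum, sum_insert hp, lt_irrefl, false_and, if_false, zero_add, card_filter,
    sum_add_distrib]
  ring

lemma invB_image_prodMap {f : ℕ → ℕ} (hf : StrictMono f) (C : Finset (ℕ × ℕ)) :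
    invB (C.image (Prod.map f id)) = invB C := by
  have hinj : Set.InjOn (Prod.map f id) (C : Set (ℕ × ℕ)) :=
    (Prod.map_injective.2 ⟨hf.injective, Function.injective_id⟩).injOn
  simp only [invB_eq_sum, sum_image hinj, Prod.map_fst, Prod.map_snd, id, hf.lt_iff_lt]

lemma card_filter_fst_le {m : ℕ} {C : Finset (ℕ × ℕ)} (hrow : OneDotPerRow m C)
    (hC : ∀ d ∈ C, 1 ≤ d.1) {k : ℕ} (hk : k ≤ 2 * m) : #(C.filter (·.1 ≤ k)) = k := by
  have hmaps : Set.MapsTo Prod.fst (C.filter (·.1 ≤ k) : Set (ℕ × ℕ)) (Icc 1 k) := by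
    intro d hd
    obtain ⟨hd, hdk⟩ := mem_filter.1 hd
    exact mem_Icc.2 ⟨hC d hd, hdk⟩
  calc #(C.filter (·.1 ≤ k)) = ∑ r ∈ Icc 1 k, #((C.filter (·.1 ≤ k)).filter (·.1 = r)) :=
        card_eq_sum_card_fiberwise hmaps
    _ = ∑ r ∈ Icc 1 k, 1 := sum_congr rfl fun r hr => by
        rw [mem_Icc] at hr
        rw [filter_filter, ← hrow r (mem_Icc.2 ⟨hr.1, by omega⟩)]
        congr 1
        exact filter_congr fun d _ => ⟨fun h => h.2, fun h => ⟨h ▸ hr.2, h⟩⟩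
    _ = k := by simp

variable {n i : ℕ} {D : Finset (ℕ × ℕ)}

theorem invB_liftConfig (hi : 2 ≤ i) (hin : i ≤ n + 1) (hD : ∀ d ∈ D, 1 ≤ d.1 ∧ d.2 < n)
    (hrow : OneDotPerRow (n - 1) D) : invB (liftConfig n i D) = i - 2 + invB D := by
  set E := D.image (Prod.map (liftRow i) id) with hE_def
  have hE : ∀ e ∈ E, 2 ≤ e.1 ∧ e.2 < n := by
    simp only [hE_def, forall_mem_image, Prod.map_fst, Prod.map_snd, id]
    exact fun d hd => ⟨two_le_liftRow i (hD d hd).1, (hD d hd).2⟩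
  have hiE : (i, n) ∉ E := fun h => (lt_irrefl n) (hE _ h).2
  have h1E : (1, n) ∉ insert (i, n) E := by
    rw [mem_insert, not_or, Prod.mk.injEq]
    exact ⟨by omega, fun h => by have := (hE _ h).1; dsimp only at this; omega⟩
  -- the dots left of and above `(i, n)` are those of rows `2, …, i - 1`
  have hleft : #(E.filter fun a => a.1 < i ∧ a.2 < n) = i - 2 := by
    rw [hE_def, filter_image, card_image_of_injective _ (prodMap_liftRow_injective i),
      ← card_filter_fst_le hrow (fun d hd => (hD d hd).1) (show i - 2 ≤ 2 * (n - 1) by omega)]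
    congr 1
    refine filter_congr fun d hd => ?_
    simp only [Prod.map_fst, Prod.map_snd, id, (hD d hd).2, and_true, liftRow]
    split_ifs <;> omega
  rw [liftConfig, invB_insert h1E, invB_insert hiE, invB_image_prodMap (liftRow_strictMono i),
    hleft]
  have hcorner : ∀ p ∈ insert (i, n) E, ¬n < p.2 ∧ ¬p.1 < 1 := by
    rw [forall_mem_insert]
    exact ⟨by dsimp only; omega, fun e he => by have := hE e he; omega⟩
  rw [filter_false_of_mem fun b hb => fun h => (hcorner b (mem_insert_of_mem hb)).1 h.2,
    filter_false_of_mem fun b hb => fun h => (hcorner b hb).1 h.2,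
    filter_false_of_mem fun a ha => fun h => (hcorner a ha).2 h.1, card_empty]
  ring

end Inversions

noncomputable def configs (n : ℕ) (lam mu : List ℕ) : Finset (Finset (ℕ × ℕ)) :=
  (Icc 1 (2 * n) ×ˢ Icc 1 n).powerset.filter fun C => IsBConfig n lam mu C

lemma partFun_eq_sum_configs (n : ℕ) (lam mu : List ℕ) :
    partFun n lam mu = ∑ C ∈ configs n lam mu, (X : ℕ[X]) ^ invB C :=
  rfl

lemma mem_configs {n : ℕ} {lam mu : List ℕ} {C : Finset (ℕ × ℕ)} :
    C ∈ configs n lam mu ↔ IsBConfig n lam mu C := by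
  rw [configs, mem_filter, mem_powerset, and_iff_right_of_imp]
  intro hC d hd
  have := hC.1 d hd
  simp only [mem_product, mem_Icc]
  omega

def maxRowInCol (n : ℕ) (C : Finset (ℕ × ℕ)) : ℕ := (C.filter (·.2 = n)).sup Prod.fst

section Fibre

variable {n i : ℕ} {lam mu : List ℕ} {C : Finset (ℕ × ℕ)}

lemma two_le_fst_of_snd_ne (hC : IsBConfig n lam mu C)
    (hf : C.filter (·.2 = n) = {(1, n), (i, n)}) {d : ℕ × ℕ} (hd : d ∈ C) (hdn : d.2 ≠ n) :
    2 ≤ d.1 ∧ d.1 ≠ i ∧ d.2 < n := by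
  have h1 : (1, n) ∈ C := (mem_filter.1 (hf ▸ mem_insert_self _ _)).1
  have hi : (i, n) ∈ C := (mem_filter.1 (hf ▸ mem_insert_of_mem (mem_singleton_self _))).1
  have hb := hC.1 d hd
  have hd1 : d.1 ≠ 1 := fun h => hdn (congrArg Prod.snd (hC.eq_of_fst_eq hd h1 h))
  have hdi : d.1 ≠ i := fun h => hdn (congrArg Prod.snd (hC.eq_of_fst_eq hd hi h))
  omega

lemma liftConfig_reduceConfig (hC : IsBConfig n lam mu C)
    (hf : C.filter (·.2 = n) = {(1, n), (i, n)}) : liftConfig n i (reduceConfig n i C) = C := by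
  have hlift : (reduceConfig n i C).image (Prod.map (liftRow i) id) = C.filter (·.2 ≠ n) := by
    rw [reduceConfig, image_image]
    conv_rhs => rw [← image_id (s := C.filter _)]
    refine image_congr fun d hd => ?_
    obtain ⟨hd, hdn⟩ := mem_filter.1 hd
    obtain ⟨h2, hi, -⟩ := two_le_fst_of_snd_ne hC hf hd hdn
    exact Prod.ext (liftRow_dropRow h2 hi) rfl
  conv_rhs => rw [← filter_union_filter_not_eq (·.2 = n) C, hf, insert_union, singleton_union]
  rw [liftConfig, hlift]

lemma reduceConfig_bounds (hC : IsBConfig n lam mu C) (hi : 2 ≤ i)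
    (hf : C.filter (·.2 = n) = {(1, n), (i, n)}) : ∀ d ∈ reduceConfig n i C, 1 ≤ d.1 ∧ d.2 < n := by
  simp only [reduceConfig, forall_mem_image, mem_filter, Prod.map_fst, Prod.map_snd, id]
  intro d ⟨hd, hdn⟩
  obtain ⟨h2, hdi, hdn⟩ := two_le_fst_of_snd_ne hC hf hd hdn
  refine ⟨?_, hdn⟩
  unfold dropRow
  split_ifs <;> omega

lemma maxRowInCol_eq (hi : 1 ≤ i) (hf : C.filter (·.2 = n) = {(1, n), (i, n)}) :
    maxRowInCol n C = i := by
  rw [maxRowInCol, hf, sup_insert, sup_singleton]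
  exact sup_eq_right.2 hi

lemma exists_filter_snd_eq_pair (hn : 2 ≤ n) (hlam : ∀ k, n - 1 ≤ k → lam.getD k 0 = 0)
    (h0 : lam.getD 0 0 = n - 1) (hC : IsBConfig n lam (delta (n - 1)) C) :
    ∃ i ∈ Icc 2 (n + 1), C.filter (·.2 = n) = {(1, n), (i, n)} := by
  obtain ⟨hadm, hrow, hcol⟩ := (isBConfig_delta_iff hlam).1 hC
  obtain ⟨a, ha⟩ := card_eq_one.1 (hrow 1 (mem_Icc.2 ⟨le_rfl, by omega⟩))
  obtain ⟨haC, ha1⟩ := mem_filter.1 (ha ▸ mem_singleton_self a)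
  have h1n : (1, n) ∈ C.filter (·.2 = n) := by
    have := (hadm a haC).2
    rw [ha1, Nat.sub_self, h0] at this
    obtain rfl : a = (1, n) := Prod.ext ha1 (by omega)
    exact mem_filter.2 ⟨haC, rfl⟩
  obtain ⟨e, he⟩ := card_eq_one.1 (show #((C.filter (·.2 = n)).erase (1, n)) = 1 by
    rw [card_erase_of_mem h1n, hcol n (mem_Icc.2 ⟨by omega, le_rfl⟩)])
  have hmem : e ∈ (C.filter (·.2 = n)).erase (1, n) := he ▸ mem_singleton_self e
  obtain ⟨hne, heC, hen⟩ := mem_erase.1 hmem |>.imp_right mem_filter.1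
  have he1 : e.1 ≠ 1 := fun h => hne (Prod.ext h hen)
  have := hadm e heC
  unfold Admissible at this
  refine ⟨e.1, mem_Icc.2 ⟨by omega, by omega⟩, ?_⟩
  rw [← insert_erase h1n, he, ← hen]

lemma mem_fiber_iff (hn : 2 ≤ n) (hlam : ∀ k, n - 1 ≤ k → lam.getD k 0 = 0)
    (h0 : lam.getD 0 0 = n - 1) (hi : 1 ≤ i) :
    C ∈ (configs n lam (delta (n - 1))).filter (maxRowInCol n · = i) ↔
      IsBConfig n lam (delta (n - 1)) C ∧ C.filter (·.2 = n) = {(1, n), (i, n)} := by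
  rw [mem_filter, mem_configs]
  refine ⟨fun ⟨hC, hmax⟩ => ⟨hC, ?_⟩, fun ⟨hC, hf⟩ => ⟨hC, maxRowInCol_eq hi hf⟩⟩
  obtain ⟨j, hj, hf⟩ := exists_filter_snd_eq_pair hn hlam h0 hC
  obtain rfl : j = i := (maxRowInCol_eq (one_le_two.trans (mem_Icc.1 hj).1) hf).symm.trans hmax
  exact hf

theorem sum_fiber (hn : 2 ≤ n) (hlam : ∀ k, n - 1 ≤ k → lam.getD k 0 = 0)
    (h0 : lam.getD 0 0 = n - 1) (hlt : ∀ k, lam.getD k 0 < n) (hi : 2 ≤ i) (hin : i ≤ n + 1) :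
    ∑ C ∈ (configs n lam (delta (n - 1))).filter (maxRowInCol n · = i), (X : ℕ[X]) ^ invB C =
      X ^ (i - 2) * cF (n - 1) (reducedPartition n lam i) := by
  have hiff {D : Finset (ℕ × ℕ)} :=
    isBConfig_liftConfig_iff (D := D) (by omega) hlam h0 (hlt _) hi hin
  have hreduce {C : Finset (ℕ × ℕ)} (hC : IsBConfig n lam (delta (n - 1)) C)
      (hf : C.filter (·.2 = n) = {(1, n), (i, n)}) :
      IsBConfig (n - 1) (reducedPartition n lam i) (delta (n - 1 - 1)) (reduceConfig n i C) :=
    (hiff (reduceConfig_bounds hC hi hf)).2 (by rwa [liftConfig_reduceConfig hC hf])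
  have hfiber := fun {C} => mem_fiber_iff (C := C) hn hlam h0 (by omega : 1 ≤ i)
  have hbounds {D : Finset (ℕ × ℕ)} (hD : D ∈ configs (n - 1) (reducedPartition n lam i)
      (delta (n - 1 - 1))) : ∀ d ∈ D, 1 ≤ d.1 ∧ d.2 < n := fun d hd => by
    have := (mem_configs.1 hD).1 d hd
    omega
  rw [cF, partFun_eq_sum_configs, mul_sum]
  refine sum_nbij' (reduceConfig n i) (liftConfig n i) ?_ ?_ ?_ ?_ ?_
  · intro C hC
    obtain ⟨hC, hf⟩ := hfiber.1 hC
    exact mem_configs.2 (hreduce hC hf)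
  · intro D hD
    exact hfiber.2 ⟨(hiff (hbounds hD)).1 (mem_configs.1 hD),
      filter_snd_liftConfig_self fun d hd => (hbounds hD d hd).2⟩
  · intro C hC
    obtain ⟨hC, hf⟩ := hfiber.1 hC
    exact liftConfig_reduceConfig hC hf
  · intro D hD
    exact reduceConfig_liftConfig fun d hd => (hbounds hD d hd).2
  · intro C hC
    obtain ⟨hC, hf⟩ := hfiber.1 hC
    conv_lhs => rw [← liftConfig_reduceConfig hC hf]
    rw [invB_liftConfig hi hin (reduceConfig_bounds hC hi hf) (hreduce hC hf).2.1, pow_add]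

end Fibre

end Dellac

open Dellac

/-- for `λ` with `λ₁ = n-1` (padded with zeros to length `n+1`),
`𝔠ⁿ(λ) = Σ_{i=2}^{n+1} q^{i-2} 𝔠^{n-1}(λ^i)` where `λ^i` is `λ` with `λ₁` and `λ_i`
removed. -/
theorem stmt15 (n : ℕ) (hn : 2 ≤ n) (lam : List ℕ) (h : IsPartIn n lam)
    (h1 : lam.getD 0 0 = n - 1) :
    cF n lam = ∑ i ∈ Finset.Icc 2 (n + 1),
      (X : Polynomial ℕ) ^ (i - 2) * cF (n - 1) (((padTo (n + 1) lam).tail).eraseIdx (i - 2)) := by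
  have hlam : ∀ k, n - 1 ≤ k → lam.getD k 0 = 0 := fun k hk => h.getD_eq_zero hk
  have hmaps : ∀ C ∈ configs n lam (delta (n - 1)), maxRowInCol n C ∈ Icc 2 (n + 1) := by
    intro C hC
    obtain ⟨i, hi, hf⟩ := exists_filter_snd_eq_pair hn hlam h1 (mem_configs.1 hC)
    rwa [maxRowInCol_eq (one_le_two.trans (mem_Icc.1 hi).1) hf]
  rw [cF, partFun_eq_sum_configs, ← sum_fiberwise_of_maps_to hmaps]
  exact sum_congr rfl fun i hi =>
    sum_fiber hn hlam h1 (h.getD_lt (by omega)) (mem_Icc.1 hi).1 (mem_Icc.1 hi).2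
end
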